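/- arXiv:1303.0327 — 2 statements merged into one kernel-verified Lean document; each statement's English description precedes it below -/
import Mathlib

section
/- Let f : [0,∞) → X be a function into a Banach space that is Pettis integrable on [0,∞). Then for every ε > 0 there exists N > 0 such that for every compact set K ⊆ [N,∞), the norm of the Pettis integral of f over K is less than ε. -/
/-!
Were the claim false, there would be pairwise disjoint compact sets `K n ⊆ [0, ∞)` with
`‖P (K n)‖ ≥ ε`. Countable additivity of the scalar integrals makes `x n = P (K n)` weakly
subseries summable: `∑_{n ∈ A} φ (x n) = φ (P (⋃_{n ∈ A} K n))` for all `A ⊆ ℕ` and all `φ`.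
This forces `x n → 0` in norm (Orlicz–Pettis). Take norming functionals `φ n` of `x n`; on the
separable closed span of the `x n`, which contains all the weak sums, a subsequence converges
weak* to some `Φ`. Every subseries sum of the real matrix `(φ k - Φ) (x i)` tends to `0` as
`k → ∞`, and a Baire category argument on the Cantor space `ℕ → Bool` upgrades this to uniform
convergence of the matrix, in particular along the diagonal, where it is `‖x k‖ - Φ (x k)`.
-/

open Filter Function MeasureTheory Set Topology

theorem continuous_tsum_indicator_setOf {a : ℕ → ℝ} (ha : Summable a) :
    Continuous fun s : ℕ → Bool => ∑' i, {i | s i}.indicator a i := by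
  refine continuous_tsum (fun i => ?_) ha.abs fun i s => norm_indicator_le_norm_self a i
  exact ((continuous_of_discreteTopology (f := fun b : Bool => if b then a i else 0)).comp
    (continuous_apply i)).congr fun s => by simp [indicator_apply]

theorem tsum_indicator_update_true_sub_false {a : ℕ → ℝ} (ha : Summable a) (s : ℕ → Bool)
    (j : ℕ) :
    ∑' i, {i | update s j true i}.indicator a i
      - ∑' i, {i | update s j false i}.indicator a i = a j := by
  rw [← Summable.tsum_sub (ha.indicator _) (ha.indicator _), ← tsum_ite_eq j a]
  congr 1 with i
  by_cases hij : i = j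
  · subst hij; simp
  · simp [hij, indicator_apply]

theorem exists_eventually_forall_abs_le_of_forall_tendsto_tsum_indicator {a : ℕ → ℕ → ℝ}
    (ha : ∀ m, Summable (a m))
    (h : ∀ A : Set ℕ, Tendsto (fun m => ∑' i, A.indicator (a m) i) atTop (𝓝 0))
    {ε : ℝ} (hε : 0 < ε) : ∃ N, ∀ᶠ j in atTop, ∀ m ≥ N, |a m j| ≤ ε := by
  let F : ℕ → (ℕ → Bool) → ℝ := fun m s => ∑' i, {i | s i}.indicator (a m) i
  let C : ℕ → Set (ℕ → Bool) := fun N => {s | ∀ m ≥ N, |F m s| ≤ ε / 2}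
  have hC : ∀ N, IsClosed (C N) := fun N => by
    simp only [C, ofPred_forall]
    exact isClosed_biInter fun m _ =>
      isClosed_le (continuous_tsum_indicator_setOf (ha m)).abs continuous_const
  have hCU : ⋃ N, C N = univ := eq_univ_of_forall fun s => mem_iUnion.2 <| eventually_atTop.1 <|
    (h {i | s i}).abs.eventually (ge_mem_nhds (by simpa using half_pos hε))
  obtain ⟨N, s, hs⟩ := nonempty_interior_of_iUnion_of_closed hC hCU
  -- `update s j b → s` in the product topology as `j → ∞`
  have hupdate : ∀ b, ∀ᶠ j in atTop, update s j b ∈ C N := fun b =>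
    (tendsto_pi_nhds.2 fun i => tendsto_const_nhds.congr' <| (eventually_gt_atTop i).mono
      fun j hj => (update_of_ne hj.ne b s).symm).eventually (mem_interior_iff_mem_nhds.1 hs)
  refine ⟨N, ((hupdate true).and (hupdate false)).mono fun j hj m hm => ?_⟩
  rw [← tsum_indicator_update_true_sub_false (ha m) s j]
  calc _ ≤ |F m (update s j true)| + |F m (update s j false)| := abs_sub _ _
    _ ≤ ε / 2 + ε / 2 := add_le_add (hj.1 m hm) (hj.2 m hm)
    _ = ε := add_halves ε

theorem tendstoUniformly_zero_of_forall_tendsto_tsum_indicator {a : ℕ → ℕ → ℝ}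
    (ha : ∀ m, Summable (a m))
    (h : ∀ A : Set ℕ, Tendsto (fun m => ∑' i, A.indicator (a m) i) atTop (𝓝 0)) :
    TendstoUniformly a 0 atTop := by
  rw [Metric.tendstoUniformly_iff]
  intro ε hε
  obtain ⟨N, hN⟩ := exists_eventually_forall_abs_le_of_forall_tendsto_tsum_indicator ha h
    (half_pos hε)
  obtain ⟨k, hk⟩ := eventually_atTop.1 hN
  have hcolumn : ∀ i, Tendsto (fun m => a m i) atTop (𝓝 0) := fun i => by simpa using h {i}
  have hhead : ∀ᶠ m in atTop, ∀ i < k, |a m i| < ε := by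
    simp only [← Finset.mem_range]
    exact (Finset.eventually_all _).2 fun i _ =>
      (hcolumn i).abs.eventually (gt_mem_nhds (by simpa using hε))
  filter_upwards [hhead, eventually_ge_atTop N] with m hm hmN i
  rw [Pi.zero_apply, dist_zero_left, Real.norm_eq_abs]
  rcases lt_or_ge i k with hi | hi
  · exact hm i hi
  · exact (hk i hi m hmN).trans_lt (half_lt_self hε)

theorem exists_strictMono_tendsto_of_separableSpace {𝕜 X : Type*} [RCLike 𝕜]
    [NormedAddCommGroup X] [NormedSpace 𝕜 X] (Y : Submodule 𝕜 X)
    [TopologicalSpace.SeparableSpace Y] (φ : ℕ → X →L[𝕜] 𝕜) {C : ℝ} (hφ : ∀ n, ‖φ n‖ ≤ C) :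
    ∃ (Φ : X →L[𝕜] 𝕜) (ms : ℕ → ℕ), StrictMono ms ∧
      ∀ y ∈ Y, Tendsto (fun k => φ (ms k) y) atTop (𝓝 (Φ y)) := by
  let ψ : ℕ → WeakDual 𝕜 Y := fun n => (φ n).comp Y.subtypeL
  have hψ : ∀ n, ψ n ∈ WeakDual.toStrongDual ⁻¹' Metric.closedBall 0 C := fun n => by
    rw [mem_preimage, mem_closedBall_zero_iff]
    exact ContinuousLinearMap.opNorm_le_bound ((φ n).comp Y.subtypeL)
      ((norm_nonneg _).trans (hφ 0)) fun y =>
        ((φ n).le_opNorm y).trans (mul_le_mul_of_nonneg_right (hφ n) (norm_nonneg _))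
  obtain ⟨Ψ, -, ms, hms, hlim⟩ := WeakDual.isSeqCompact_closedBall 𝕜 Y 0 C hψ
  obtain ⟨Φ, hΦ, -⟩ := exists_extension_norm_eq Y (WeakDual.toStrongDual Ψ)
  refine ⟨Φ, ms, hms, fun y hy => ?_⟩
  rw [show Φ y = Ψ ⟨y, hy⟩ from hΦ ⟨y, hy⟩]
  exact ((WeakDual.eval_continuous (⟨y, hy⟩ : Y)).tendsto Ψ).comp hlim

theorem Submodule.mem_of_forall_dual_eq_zero {X : Type*} [NormedAddCommGroup X]
    [NormedSpace ℝ X] (Y : Submodule ℝ X) (hY : IsClosed (Y : Set X)) {z : X}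
    (h : ∀ φ : X →L[ℝ] ℝ, (∀ y ∈ Y, φ y = 0) → φ z = 0) : z ∈ Y := by
  have := hY
  by_contra hz
  obtain ⟨g, hg⟩ :=
    SeparatingDual.exists_ne_zero (R := ℝ) (show Y.mkQL z ≠ 0 by simpa using hz)
  exact hg (h (g.comp Y.mkQL) fun y hy => by simp [(Submodule.Quotient.mk_eq_zero Y).2 hy])

theorem tendsto_zero_of_forall_hasSum_indicator {X : Type*} [NormedAddCommGroup X]
    [NormedSpace ℝ X] {x : ℕ → X} {y : Set ℕ → X}
    (hy : ∀ (A : Set ℕ) (φ : X →L[ℝ] ℝ), HasSum (A.indicator fun n => φ (x n)) (φ (y A))) :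
    Tendsto x atTop (𝓝 0) := by
  set Y := (Submodule.span ℝ (range x)).topologicalClosure
  have : TopologicalSpace.SeparableSpace Y :=
    ((countable_range x).isSeparable.span (R := ℝ)).closure.separableSpace
  have hyY : ∀ A, y A ∈ Y := fun A =>
    Y.mem_of_forall_dual_eq_zero (Submodule.isClosed_topologicalClosure _) fun φ hφ =>
      (hy A φ).unique <| by
        simp [hφ _ (Submodule.le_topologicalClosure _ (Submodule.subset_span (mem_range_self _)))]
  choose φ hφ hφx using fun n => exists_dual_vector'' ℝ (x n)
  refine tendsto_of_subseq_tendsto fun ns hns => ?_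
  obtain ⟨Φ, ms, hms, hlim⟩ :=
    exists_strictMono_tendsto_of_separableSpace Y (φ ∘ ns) fun k => hφ _
  let a : ℕ → ℕ → ℝ := fun k i => φ (ns (ms k)) (x i) - Φ (x i)
  have hrow : ∀ A k, HasSum (A.indicator (a k)) (φ (ns (ms k)) (y A) - Φ (y A)) := fun A k => by
    simpa [a, indicator_sub] using (hy A (φ (ns (ms k)))).sub (hy A Φ)
  have hunif : TendstoUniformly a 0 atTop :=
    tendstoUniformly_zero_of_forall_tendsto_tsum_indicator
      (fun k => by simpa using (hrow univ k).summable) fun A => by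
        simpa [(hrow A _).tsum_eq] using (hlim (y A) (hyY A)).sub_const (Φ (y A))
  have hdiag : Tendsto (fun k => a k (ns (ms k))) atTop (𝓝 0) :=
    Metric.tendsto_nhds.2 fun ε hε => (Metric.tendstoUniformly_iff.1 hunif ε hε).mono
      fun k hk => by simpa [dist_comm] using hk (ns (ms k))
  have hΦ : Tendsto (fun n => Φ (x n)) atTop (𝓝 0) := by
    simpa using (hy univ Φ).summable.tendsto_atTop_zero
  refine ⟨ms, tendsto_zero_iff_norm_tendsto_zero.2 ?_⟩
  simpa [a, hφx] using hdiag.add (hΦ.comp (hns.comp hms.tendsto_atTop))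

theorem exists_pairwise_disjoint_of_subset_Ici {K : ℝ → Set ℝ} {c : ℝ}
    (hbdd : ∀ N, c < N → BddAbove (K N)) (hK : ∀ N, c < N → K N ⊆ Ici N) :
    ∃ b : ℕ → ℝ, (∀ n, c < b n) ∧ Pairwise (Disjoint on fun n => K (b n)) := by
  let b : ℕ → ℝ := fun n => Nat.rec (c + 1) (fun _ N => max N (sSup (K N)) + 1) n
  have hb_succ : ∀ n, b (n + 1) = max (b n) (sSup (K (b n))) + 1 := fun n => rfl
  have hb_mono : StrictMono b := strictMono_nat_of_lt_succ fun n => by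
    rw [hb_succ]; linarith [le_max_left (b n) (sSup (K (b n)))]
  have hb_gt : ∀ n, c < b n := fun n =>
    (lt_add_one c).trans_le (hb_mono.monotone (Nat.zero_le n))
  have hK_lt : ∀ n, ∀ t ∈ K (b n), t < b (n + 1) := fun n t ht => by
    rw [hb_succ]
    linarith [le_csSup (hbdd _ (hb_gt n)) ht, le_max_right (b n) (sSup (K (b n)))]
  refine ⟨b, hb_gt, (pairwise_disjoint_on _).2 fun m n hmn => disjoint_left.2 fun t htm htn =>
    (hK_lt m t htm).not_ge ((hb_mono.monotone hmn).trans (hK _ (hb_gt n) htn))⟩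

theorem hasSum_indicator_pettis_iUnion {α X : Type*} [MeasurableSpace α] {μ : Measure α}
    [NormedAddCommGroup X] [NormedSpace ℝ X] {f : α → X} {P : Set α → X} {S : Set α}
    (hf : ∀ φ : X →L[ℝ] ℝ, IntegrableOn (fun t => φ (f t)) S μ)
    (hP : ∀ E, MeasurableSet E → E ⊆ S → ∀ φ : X →L[ℝ] ℝ, φ (P E) = ∫ t in E, φ (f t) ∂μ)
    {K : ℕ → Set α} (hK : ∀ n, MeasurableSet (K n)) (hKS : ∀ n, K n ⊆ S)
    (hdisj : Pairwise (Disjoint on K)) (A : Set ℕ) (φ : X →L[ℝ] ℝ) :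
    HasSum (A.indicator fun n => φ (P (K n))) (φ (P (⋃ n : A, K n))) := by
  have hA : ⋃ n : A, K n ⊆ S := iUnion_subset fun n => hKS n
  rw [hP _ (MeasurableSet.iUnion fun n : A => hK n) hA]
  refine hasSum_subtype_iff_indicator.1 ?_
  simpa only [hP _ (hK _) (hKS _), comp_def] using hasSum_integral_iUnion (fun n : A => hK n)
    (fun m n hmn => hdisj (Subtype.coe_ne_coe.2 hmn)) ((hf φ).mono_set hA)

theorem pettis_integral_small_tails_general
    {X : Type*} [NormedAddCommGroup X] [NormedSpace ℝ X]
    (f : ℝ → X) (P : Set ℝ → X)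
    (hL1 : ∀ φ : X →L[ℝ] ℝ, IntegrableOn (fun t => φ (f t)) (Set.Ici 0))
    (hP : ∀ E : Set ℝ, MeasurableSet E → E ⊆ Set.Ici 0 →
      ∀ φ : X →L[ℝ] ℝ, φ (P E) = ∫ t in E, φ (f t)) :
    ∀ ε : ℝ, 0 < ε → ∃ N : ℝ, 0 < N ∧
      ∀ K : Set ℝ, IsCompact K → K ⊆ Set.Ici N → ‖P K‖ < ε := by
  intro ε hε
  by_contra! hlarge
  choose! K hKc hKN hKP using hlarge
  obtain ⟨b, hb, hdisj⟩ :=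
    exists_pairwise_disjoint_of_subset_Ici (fun N hN => (hKc N hN).bddAbove) hKN
  have hK0 : ∀ n, K (b n) ⊆ Ici 0 := fun n => (hKN _ (hb n)).trans (Ici_subset_Ici.2 (hb n).le)
  have hlim : Tendsto (fun n => P (K (b n))) atTop (𝓝 0) :=
    tendsto_zero_of_forall_hasSum_indicator <| hasSum_indicator_pettis_iUnion hL1 hP
      (fun n => (hKc _ (hb n)).measurableSet) hK0 hdisj
  obtain ⟨n, hn⟩ := (hlim.norm.eventually (gt_mem_nhds (by simpa using hε))).exists
  exact (hKP _ (hb n)).not_gt hn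

theorem pettis_integral_small_tails
    {X : Type*} [NormedAddCommGroup X] [NormedSpace ℝ X]
    (f : ℝ → X) (P : Set ℝ → X)
    (hweak : ∀ φ : X →L[ℝ] ℝ, AEMeasurable (fun t => φ (f t)) (volume.restrict (Set.Ici 0)))
    (hL1 : ∀ φ : X →L[ℝ] ℝ, IntegrableOn (fun t => φ (f t)) (Set.Ici 0))
    (hP : ∀ E : Set ℝ, MeasurableSet E → E ⊆ Set.Ici 0 →
      ∀ φ : X →L[ℝ] ℝ, φ (P E) = ∫ t in E, φ (f t)) :
    ∀ ε : ℝ, 0 < ε → ∃ N : ℝ, 0 < N ∧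
      ∀ K : Set ℝ, IsCompact K → K ⊆ Set.Ici N → ‖P K‖ < ε :=
  pettis_integral_small_tails_general f P hL1 hP
end

section
/- Let (T_t)_{t≥0} be a jointly measurable C0-semigroup on a separable Banach space X with an invariant ergodic Borel probability measure μ with full support. Then μ-almost every x ∈ X has dense orbit under the semigroup with positive lower density visits: for every non-empty open U ⊆ X, the set {t ≥ 0 : T_t x ∈ U} has lower density at least μ(U) > 0; in particular (T_t) is frequently hypercyclic. -/
/-!
Fix an open set `V`. The time-one map `T 1` preserves `μ`, and the time spent in `V` up to an
integer time `n` is the Birkhoff sum of `F x = |{t ∈ [0, 1] : T t x ∈ V}|`, whose mean is `μ V`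
by Fubini and invariance. The Katznelson–Weiss covering argument bounds `∫ F` by the integral of
the lower density `ψ = liminf (time in V up to n) / n`. The times spent in `V` by `x` and by
`T s x` differ by at most `s`, so `ψ` is invariant under the whole semiflow, hence almost surely
at least its mean, and so at least `μ V`, by ergodicity; monotonicity of the occupation time
passes from integer to real times. Finally, finite unions of basic open sets form a countable
family approximating every open set from inside in measure, so one null set serves all open
sets, and full support makes the bound positive.
-/

open MeasureTheory Filter

theorem le_of_forall_natCast_mul_le_mul_add {a b C : ℝ} (h : ∀ N : ℕ, N * a ≤ N * b + C) :
    a ≤ b := by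
  by_contra! hba
  obtain ⟨N, hN⟩ := exists_nat_gt (C / (a - b))
  have := h N
  rw [div_lt_iff₀ (sub_pos.2 hba)] at hN
  nlinarith

theorem liminf_div_natCast_le_of_le_add {u v : ℕ → ℝ} {C : ℝ} (hu : ∀ n, 0 ≤ u n)
    (hv : ∀ n, v n ≤ n) (huv : ∀ n, u n ≤ v n + C) :
    liminf (fun n => u n / n) atTop ≤ liminf (fun n => v n / n) atTop := by
  have hbdd : IsBoundedUnder (· ≥ ·) atTop (fun n => u n / n) :=
    isBoundedUnder_of ⟨0, fun n => div_nonneg (hu n) n.cast_nonneg⟩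
  have hcobdd : IsCoboundedUnder (· ≥ ·) atTop (fun n => v n / n) :=
    isCoboundedUnder_ge_of_le atTop (x := 1) fun n => div_le_one_of_le₀ (hv n) n.cast_nonneg
  refine le_of_forall_lt_imp_le_of_dense fun c hc => le_liminf_of_le hcobdd ?_
  obtain ⟨c', hcc', hc'⟩ := exists_between hc
  filter_upwards [eventually_lt_of_lt_liminf hc' hbdd,
    (tendsto_const_div_atTop_nhds_zero_nat C).eventually (gt_mem_nhds (sub_pos.2 hcc')),
    eventually_gt_atTop 0] with n hn hCn hn0
  have : u n / n ≤ v n / n + C / n := by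
    rw [← add_div]; exact div_le_div_of_nonneg_right (huv n) n.cast_nonneg
  linarith

theorem div_natFloor_le_add_one_div {w : ℝ → ℝ} (hw : Monotone w) (hw0 : ∀ N, 0 ≤ w N)
    (hwN : ∀ N, 0 ≤ N → w N ≤ N) {N : ℝ} (hN : 1 ≤ N) :
    w ⌊N⌋₊ / ⌊N⌋₊ ≤ (w N + 1) / N := by
  set n := ⌊N⌋₊
  have hn1 : (1 : ℝ) ≤ n := by exact_mod_cast (Nat.one_le_floor_iff N).2 hN
  have hnN : (n : ℝ) ≤ N := Nat.floor_le (by linarith)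
  have hNn : N < n + 1 := Nat.lt_floor_add_one N
  have hwn : w n ≤ n := hwN n (by linarith)
  have hw0n := hw0 n
  have hmono : w n ≤ w N := hw hnN
  rw [div_le_div_iff₀ (by linarith) (by linarith)]
  nlinarith [mul_le_mul_of_nonneg_left hNn.le hw0n,
    mul_le_mul_of_nonneg_right hmono (by linarith : (0 : ℝ) ≤ n)]

theorem liminf_natCast_div_le_liminf_div {w : ℝ → ℝ} (hw : Monotone w) (hw0 : ∀ N, 0 ≤ w N)
    (hwN : ∀ N, 0 ≤ N → w N ≤ N) :
    liminf (fun n : ℕ => w n / n) atTop ≤ liminf (fun N : ℝ => w N / N) atTop := by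
  have hbdd : IsBoundedUnder (· ≥ ·) atTop (fun n : ℕ => w n / n) :=
    isBoundedUnder_of ⟨0, fun n => div_nonneg (hw0 n) n.cast_nonneg⟩
  have hcobdd : IsCoboundedUnder (· ≥ ·) atTop (fun N : ℝ => w N / N) := by
    refine isCoboundedUnder_ge_of_le atTop (x := 1) fun N => ?_
    rcases le_or_gt N 0 with hN | hN
    · exact (div_nonpos_of_nonneg_of_nonpos (hw0 N) hN).trans zero_le_one
    · exact div_le_one_of_le₀ (hwN N hN.le) hN.le
  refine le_of_forall_lt_imp_le_of_dense fun c hc => le_liminf_of_le hcobdd ?_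
  obtain ⟨c', hcc', hc'⟩ := exists_between hc
  obtain ⟨n₀, hn₀⟩ := eventually_atTop.1 (eventually_lt_of_lt_liminf hc' hbdd)
  filter_upwards [eventually_ge_atTop (n₀ : ℝ), eventually_ge_atTop 1,
    eventually_ge_atTop (c' - c)⁻¹] with N hNn₀ hN1 hNc
  have hfloor := hn₀ ⌊N⌋₊ (Nat.le_floor hNn₀)
  have hinv : 1 / N ≤ c' - c := by
    rw [one_div]; exact inv_le_of_inv_le₀ (sub_pos.2 hcc') hNc
  have := div_natFloor_le_add_one_div hw hw0 hwN hN1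
  rw [add_div] at this
  linarith

section KatznelsonWeiss

variable {α : Type*}

theorem birkhoffSum_le_natCast {S : α → α} {G : α → ℝ} (hG1 : G ≤ 1) (n : ℕ) (x : α) :
    birkhoffSum S G n x ≤ n := by
  simpa [birkhoffSum] using
    Finset.sum_le_card_nsmul (Finset.range n) (fun k => G (S^[k] x)) 1 fun k _ => hG1 (S^[k] x)

/-- The covering step of the Katznelson–Weiss proof: an orbit segment is cut into consecutive
good blocks of length at most `M`, followed by a remainder of length at most `M`. -/
theorem birkhoffSum_le_mul_add_of_forall_exists {S : α → α} {G a : α → ℝ} (hG1 : G ≤ 1)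
    (ha0 : 0 ≤ a) (haS : a ∘ S = a) {M : ℕ}
    (hblock : ∀ x, ∃ n, 0 < n ∧ n ≤ M ∧ birkhoffSum S G n x ≤ n * a x) (N : ℕ) (x : α) :
    birkhoffSum S G N x ≤ N * a x + M := by
  induction N using Nat.strong_induction_on generalizing x with
  | _ N ih =>
    rcases le_or_gt N M with hNM | hMN
    · have hNM : (N : ℝ) ≤ M := by exact_mod_cast hNM
      have hax : 0 ≤ a x := ha0 x
      nlinarith [birkhoffSum_le_natCast (S := S) hG1 N x, Nat.cast_nonneg (α := ℝ) N]
    · obtain ⟨n, hn0, hnM, hn⟩ := hblock x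
      obtain ⟨m, rfl⟩ : ∃ m, N = n + m := ⟨N - n, by omega⟩
      have hrest := ih m (by omega) (S^[n] x)
      rw [show a (S^[n] x) = a x from congrFun (Function.iterate_invariant haS n) x] at hrest
      rw [birkhoffSum_add]
      push_cast
      linarith

variable [MeasurableSpace α] {μ : Measure α}

theorem MeasurableSet.accumulate {s : ℕ → Set α} (hs : ∀ n, MeasurableSet (s n)) (M : ℕ) :
    MeasurableSet (Set.accumulate s M) := by
  rw [Set.accumulate_def]
  exact .biUnion (Set.to_countable _) fun n _ => hs n

theorem tendsto_measure_compl_accumulate [IsFiniteMeasure μ] {s : ℕ → Set α}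
    (hs : ∀ n, MeasurableSet (s n)) (hcover : ⋃ n, s n = Set.univ) :
    Tendsto (fun M => μ (Set.accumulate s M)ᶜ) atTop (nhds 0) := by
  have hacc := tendsto_measure_iUnion_accumulate (μ := μ) (f := s)
  rw [hcover] at hacc
  have hsub := ENNReal.Tendsto.sub tendsto_const_nhds hacc (Or.inl (measure_ne_top μ Set.univ))
  rw [tsub_self] at hsub
  refine hsub.congr fun M => ?_
  rw [measure_compl (.accumulate hs M) (measure_ne_top μ _)]

theorem integrable_birkhoffSum {E : Type*} [NormedAddCommGroup E] {S : α → α}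
    (hS : MeasurePreserving S μ μ) {g : α → E} (hg : Integrable g μ) (n : ℕ) :
    Integrable (birkhoffSum S g n) μ :=
  integrable_finsetSum (Finset.range n) fun k _ => (hS.iterate k).integrable_comp_of_integrable hg

theorem integral_birkhoffSum {E : Type*} [NormedAddCommGroup E] [NormedSpace ℝ E] {S : α → α}
    (hS : MeasurePreserving S μ μ) {g : α → E} (hg : Integrable g μ) (n : ℕ) :
    ∫ x, birkhoffSum S g n x ∂μ = n • ∫ x, g x ∂μ := by
  have hcomp : ∀ k, ∫ x, g (S^[k] x) ∂μ = ∫ x, g x ∂μ := fun k => by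
    conv_rhs => rw [← (hS.iterate k).map_eq]
    exact (integral_map (hS.iterate k).aemeasurable
      (by rw [(hS.iterate k).map_eq]; exact hg.aestronglyMeasurable)).symm
  simp only [birkhoffSum]
  rw [integral_finsetSum (f := fun k x => g (S^[k] x)) _ fun k _ =>
    (hS.iterate k).integrable_comp_of_integrable hg]
  simp [hcomp]

theorem integral_le_integral_of_birkhoffSum_le_mul_add [IsFiniteMeasure μ] {S : α → α}
    (hS : MeasurePreserving S μ μ) {G a : α → ℝ} (hG : Integrable G μ) (ha : Integrable a μ)
    {C : ℝ} (h : ∀ N x, birkhoffSum S G N x ≤ N * a x + C) :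
    ∫ x, G x ∂μ ≤ ∫ x, a x ∂μ := by
  refine le_of_forall_natCast_mul_le_mul_add (C := μ.real Set.univ * C) fun N => ?_
  have hint := integral_mono (g := fun x => N * a x + C) (integrable_birkhoffSum hS hG N)
    ((ha.const_mul N).add (integrable_const C)) (h N)
  rwa [integral_birkhoffSum hS hG, integral_add (ha.const_mul N) (integrable_const C),
    integral_const_mul, integral_const, nsmul_eq_mul, smul_eq_mul] at hint

theorem integral_le_integral_indicator_compl_add_measureReal [IsFiniteMeasure μ] {F : α → ℝ}
    (hF : Integrable F μ) (hF1 : F ≤ 1) {B : Set α} (hB : MeasurableSet B) :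
    ∫ x, F x ∂μ ≤ ∫ x, Bᶜ.indicator F x ∂μ + μ.real B := by
  have hBF : ∫ x in B, F x ∂μ ≤ μ.real B := by
    calc ∫ x in B, F x ∂μ ≤ ∫ _ in B, (1 : ℝ) ∂μ :=
          setIntegral_mono_on hF.integrableOn (integrable_const 1).integrableOn hB
            fun x _ => hF1 x
      _ = μ.real B := by simp
  rw [← integral_add_compl hB hF, integral_indicator hB.compl]
  linarith

/-- The half of Birkhoff's pointwise ergodic theorem that bounds lower averages, proved as by
Katznelson and Weiss. -/
theorem integral_le_integral_of_frequently_birkhoffSum_le [IsFiniteMeasure μ] {S : α → α}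
    (hS : MeasurePreserving S μ μ) {F ψ : α → ℝ} (hF : Measurable F) (hF0 : 0 ≤ F) (hF1 : F ≤ 1)
    (hψ : Measurable ψ) (hψi : Integrable ψ μ) (hψ0 : 0 ≤ ψ) (hψS : ψ ∘ S = ψ)
    (hfreq : ∀ x, ∀ ε > 0, ∃ᶠ n in atTop, birkhoffSum S F n x ≤ n * (ψ x + ε)) :
    ∫ x, F x ∂μ ≤ ∫ x, ψ x ∂μ := by
  have hFi : Integrable F μ := .of_mem_Icc 0 1 hF.aemeasurable (.of_forall fun x => ⟨hF0 x, hF1 x⟩)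
  refine le_of_forall_pos_le_add fun δ hδ => ?_
  set ε := δ / (μ.real Set.univ + 1)
  have hε : 0 < ε := by positivity
  let good : ℕ → Set α := fun n => {x | 0 < n ∧ birkhoffSum S F n x ≤ n * (ψ x + ε)}
  have hgood : ∀ n, MeasurableSet (good n) := fun n =>
    (MeasurableSet.const _).inter <| measurableSet_le
      (Finset.measurable_sum _ fun k _ => hF.comp (hS.measurable.iterate k)) (by fun_prop)
  have hcover : ⋃ n, good n = Set.univ := Set.eq_univ_of_forall fun x => Set.mem_iUnion.2 <|
    ((hfreq x ε hε).and_eventually (eventually_gt_atTop 0)).exists.imp fun _ hn => ⟨hn.2, hn.1⟩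
  obtain ⟨M, hM1, hMsmall⟩ : ∃ M, 1 ≤ M ∧ μ (Set.accumulate good M)ᶜ < ENNReal.ofReal ε :=
    ((eventually_ge_atTop 1).and ((tendsto_measure_compl_accumulate hgood hcover).eventually
      (gt_mem_nhds (ENNReal.ofReal_pos.2 hε)))).exists
  set B := (Set.accumulate good M)ᶜ
  have hB : MeasurableSet B := (MeasurableSet.accumulate hgood M).compl
  -- On the bad set `B` we replace `F` by `0`, so that blocks of length `1` become good.
  set G := Bᶜ.indicator F
  have hGF : G ≤ F := Set.indicator_le_self' fun x _ => hF0 x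
  have hsum : ∀ N x, birkhoffSum S G N x ≤ N * (ψ x + ε) + M := by
    refine birkhoffSum_le_mul_add_of_forall_exists (hGF.trans hF1)
      (fun x => add_nonneg (hψ0 x) hε.le) (by ext x; simpa using congrFun hψS x) fun x => ?_
    by_cases hx : x ∈ B
    · exact ⟨1, one_pos, hM1, by simp [G, hx, birkhoffSum_one, add_nonneg (hψ0 x) hε.le]⟩
    · obtain ⟨n, hnM, hn0, hn⟩ := Set.mem_accumulate.1 (not_not.1 hx)
      exact ⟨n, hn0, hnM, le_trans (Finset.sum_le_sum fun k _ => hGF (S^[k] x)) hn⟩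
  have hGψ := integral_le_integral_of_birkhoffSum_le_mul_add (a := fun x => ψ x + ε) hS
    (hFi.indicator hB.compl)
    (hψi.add (integrable_const ε)) hsum
  have hFG := integral_le_integral_indicator_compl_add_measureReal hFi hF1 hB
  rw [integral_add hψi (integrable_const ε), integral_const, smul_eq_mul] at hGψ
  have hBε : μ.real B ≤ ε := ENNReal.toReal_le_of_le_ofReal hε.le hMsmall.le
  have hδε : μ.real Set.univ * ε + ε = δ := by
    simp only [ε]
    field_simp
  linarith

end KatznelsonWeiss

section OccupationTime

variable {X : Type*}

def visitTimes (T : ℝ → X → X) (V : Set X) (x : X) (N : ℝ) : Set ℝ :=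
  {t | 0 ≤ t ∧ t ≤ N ∧ T t x ∈ V}

noncomputable def occupationTime (T : ℝ → X → X) (V : Set X) (x : X) (N : ℝ) : ℝ :=
  (volume (visitTimes T V x N)).toReal

/-- Integer times keep this a countable `liminf`, hence measurable in `x`. -/
noncomputable def lowerVisitDensity (T : ℝ → X → X) (V : Set X) (x : X) : ℝ :=
  liminf (fun n : ℕ => occupationTime T V x n / n) atTop

variable {T : ℝ → X → X} {V : Set X}

theorem volume_visitTimes_le (x : X) (N : ℝ) : volume (visitTimes T V x N) ≤ ENNReal.ofReal N :=
  (measure_mono fun _ ht => Set.mem_Icc.2 ⟨ht.1, ht.2.1⟩).trans (by rw [Real.volume_Icc, sub_zero])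

theorem volume_visitTimes_ne_top (x : X) (N : ℝ) : volume (visitTimes T V x N) ≠ ⊤ :=
  ((volume_visitTimes_le x N).trans_lt ENNReal.ofReal_lt_top).ne

theorem occupationTime_nonneg (x : X) (N : ℝ) : 0 ≤ occupationTime T V x N :=
  ENNReal.toReal_nonneg

theorem occupationTime_le (x : X) {N : ℝ} (hN : 0 ≤ N) : occupationTime T V x N ≤ N :=
  ENNReal.toReal_le_of_le_ofReal hN (volume_visitTimes_le x N)

theorem occupationTime_div_le_one (x : X) (N : ℝ) : occupationTime T V x N / N ≤ 1 := by
  rcases le_or_gt N 0 with hN | hN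
  · exact (div_nonpos_of_nonneg_of_nonpos (occupationTime_nonneg x N) hN).trans zero_le_one
  · exact div_le_one_of_le₀ (occupationTime_le x hN.le) hN.le

theorem occupationTime_mono {V' : Set X} (hVV' : V ⊆ V') (x : X) {N N' : ℝ} (hNN' : N ≤ N') :
    occupationTime T V x N ≤ occupationTime T V' x N' :=
  ENNReal.toReal_mono (volume_visitTimes_ne_top x N')
    (measure_mono fun _ ht => ⟨ht.1, ht.2.1.trans hNN', hVV' ht.2.2⟩)

theorem liminf_occupationTime_div_nonneg (x : X) :
    0 ≤ liminf (fun N : ℝ => occupationTime T V x N / N) atTop := by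
  refine le_liminf_of_le (isCoboundedUnder_ge_of_le atTop fun N => occupationTime_div_le_one x N) ?_
  filter_upwards [eventually_ge_atTop 0] with N hN
  exact div_nonneg (occupationTime_nonneg x N) hN

theorem liminf_occupationTime_div_mono {V' : Set X} (hVV' : V ⊆ V') (x : X) :
    liminf (fun N : ℝ => occupationTime T V x N / N) atTop ≤
      liminf (fun N : ℝ => occupationTime T V' x N / N) atTop := by
  refine liminf_le_liminf ?_ (isBoundedUnder_of_eventually_ge (a := 0) ?_)
    (isCoboundedUnder_ge_of_le atTop fun N => occupationTime_div_le_one x N)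
  · filter_upwards [eventually_ge_atTop 0] with N hN
    exact div_le_div_of_nonneg_right (occupationTime_mono hVV' x le_rfl) hN
  · filter_upwards [eventually_ge_atTop 0] with N hN
    exact div_nonneg (occupationTime_nonneg x N) hN

theorem lowerVisitDensity_nonneg (x : X) : 0 ≤ lowerVisitDensity T V x :=
  le_liminf_of_le (isCoboundedUnder_ge_of_le atTop fun n => occupationTime_div_le_one x n)
    (.of_forall fun n => div_nonneg (occupationTime_nonneg x n) n.cast_nonneg)

theorem lowerVisitDensity_le_one (x : X) : lowerVisitDensity T V x ≤ 1 :=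
  liminf_le_of_frequently_le (.of_forall fun n => occupationTime_div_le_one x n)
    (isBoundedUnder_of ⟨0, fun n => div_nonneg (occupationTime_nonneg x n) n.cast_nonneg⟩)

theorem lowerVisitDensity_le_liminf_occupationTime_div (x : X) :
    lowerVisitDensity T V x ≤ liminf (fun N : ℝ => occupationTime T V x N / N) atTop :=
  liminf_natCast_div_le_liminf_div (fun _ _ h => occupationTime_mono subset_rfl x h)
    (fun N => occupationTime_nonneg x N) fun _ hN => occupationTime_le x hN

theorem iterate_apply_one_eq (hT0 : T 0 = id) (hT : ∀ s t, 0 ≤ s → 0 ≤ t → T (s + t) = T s ∘ T t)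
    (n : ℕ) : (T 1)^[n] = T n := by
  induction n with
  | zero => simp [hT0]
  | succ n ih =>
    rw [Function.iterate_succ', ih, Nat.cast_succ, add_comm, hT 1 n zero_le_one n.cast_nonneg]

variable [MeasurableSpace X]

theorem occupationTime_add (hT : ∀ s t, 0 ≤ s → 0 ≤ t → T (s + t) = T s ∘ T t)
    (hTm : Measurable fun p : ℝ × X => T p.1 p.2) (hV : MeasurableSet V)
    (x : X) {a b : ℝ} (ha : 0 ≤ a) (hb : 0 ≤ b) :
    occupationTime T V x (a + b) = occupationTime T V x a + occupationTime T V (T a x) b := by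
  set late := {t : ℝ | a ≤ t ∧ t ≤ a + b ∧ T t x ∈ V}
  have hlate : MeasurableSet late := measurableSet_Ici.inter <| measurableSet_Iic.inter <|
    hV.preimage (hTm.comp (measurable_id.prodMk measurable_const))
  have hsplit : visitTimes T V x (a + b) = visitTimes T V x a ∪ late := by
    ext t
    simp only [visitTimes, Set.mem_union, Set.mem_ofPred_eq, late]
    constructor
    · rintro ⟨h0, hab, hV⟩
      rcases le_or_gt t a with hta | hat
      exacts [.inl ⟨h0, hta, hV⟩, .inr ⟨hat.le, hab, hV⟩]
    · rintro (⟨h0, hta, hV⟩ | ⟨hat, hab, hV⟩)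
      exacts [⟨h0, by linarith, hV⟩, ⟨by linarith, hab, hV⟩]
  have hdisj : AEDisjoint volume (visitTimes T V x a) late :=
    measure_mono_null (fun t ht => le_antisymm ht.1.2.1 ht.2.1) Real.volume_singleton
  have hshift : (· + a) ⁻¹' late = visitTimes T V (T a x) b := by
    ext t
    simp only [visitTimes, Set.mem_preimage, Set.mem_ofPred_eq, late]
    refine ⟨fun ⟨h0, hb', hV⟩ => ⟨by linarith, by linarith, ?_⟩,
      fun ⟨h0, hb', hV⟩ => ⟨by linarith, by linarith, ?_⟩⟩
    · simpa [hT t a (by linarith) ha] using hV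
    · simpa [hT t a h0 ha] using hV
  unfold occupationTime
  rw [hsplit, measure_union₀ hlate.nullMeasurableSet hdisj,
    ← measure_preimage_add_right volume a late, hshift,
    ENNReal.toReal_add (volume_visitTimes_ne_top _ _) (volume_visitTimes_ne_top _ _)]

theorem abs_occupationTime_apply_sub_le (hT : ∀ s t, 0 ≤ s → 0 ≤ t → T (s + t) = T s ∘ T t)
    (hTm : Measurable fun p : ℝ × X => T p.1 p.2) (hV : MeasurableSet V) (x : X) {s N : ℝ}
    (hs : 0 ≤ s) (hN : 0 ≤ N) :
    |occupationTime T V (T s x) N - occupationTime T V x N| ≤ s := by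
  have h₁ := occupationTime_add hT hTm hV x hs hN
  have h₂ := occupationTime_add hT hTm hV x hN hs
  rw [add_comm N s] at h₂
  rw [abs_sub_le_iff]
  constructor <;> linarith [occupationTime_le (T := T) (V := V) x hs,
    occupationTime_le (T := T) (V := V) (T N x) hs, occupationTime_nonneg (T := T) (V := V) x s,
    occupationTime_nonneg (T := T) (V := V) (T N x) s]

theorem lowerVisitDensity_apply (hT : ∀ s t, 0 ≤ s → 0 ≤ t → T (s + t) = T s ∘ T t)
    (hTm : Measurable fun p : ℝ × X => T p.1 p.2) (hV : MeasurableSet V) (x : X) {s : ℝ}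
    (hs : 0 ≤ s) : lowerVisitDensity T V (T s x) = lowerVisitDensity T V x := by
  have h n := abs_le.1 (abs_occupationTime_apply_sub_le hT hTm hV x hs (Nat.cast_nonneg n))
  refine le_antisymm (liminf_div_natCast_le_of_le_add (C := s) (fun n => occupationTime_nonneg _ _)
    (fun n => occupationTime_le _ n.cast_nonneg) fun n => ?_)
    (liminf_div_natCast_le_of_le_add (C := s) (fun n => occupationTime_nonneg _ _)
    (fun n => occupationTime_le _ n.cast_nonneg) fun n => ?_)
  · linarith [(h n).2]
  · linarith [(h n).1]

theorem occupationTime_natCast_eq_birkhoffSum (hT0 : T 0 = id)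
    (hT : ∀ s t, 0 ≤ s → 0 ≤ t → T (s + t) = T s ∘ T t)
    (hTm : Measurable fun p : ℝ × X => T p.1 p.2) (hV : MeasurableSet V) (x : X) (n : ℕ) :
    occupationTime T V x n = birkhoffSum (T 1) (fun y => occupationTime T V y 1) n x := by
  induction n with
  | zero =>
    rw [birkhoffSum_zero, Nat.cast_zero]
    exact le_antisymm (occupationTime_le x le_rfl) (occupationTime_nonneg x 0)
  | succ n ih =>
    rw [birkhoffSum_succ, ← ih, iterate_apply_one_eq hT0 hT, Nat.cast_succ,
      occupationTime_add hT hTm hV x n.cast_nonneg zero_le_one]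

theorem measurableSet_setOf_snd_mem_visitTimes (hTm : Measurable fun p : ℝ × X => T p.1 p.2)
    (hV : MeasurableSet V) (N : ℝ) : MeasurableSet {p : X × ℝ | p.2 ∈ visitTimes T V p.1 N} :=
  (measurable_snd measurableSet_Ici).inter <| (measurable_snd measurableSet_Iic).inter <|
    hV.preimage (hTm.comp measurable_swap)

theorem measurable_occupationTime (hTm : Measurable fun p : ℝ × X => T p.1 p.2)
    (hV : MeasurableSet V) (N : ℝ) : Measurable fun x => occupationTime T V x N :=
  (measurable_measure_prodMk_left (measurableSet_setOf_snd_mem_visitTimes hTm hV N)).ennreal_toReal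

theorem measurable_lowerVisitDensity (hTm : Measurable fun p : ℝ × X => T p.1 p.2)
    (hV : MeasurableSet V) : Measurable (lowerVisitDensity T V) :=
  .liminf fun n => (measurable_occupationTime hTm hV n).div_const _

variable {μ : Measure X}

theorem integral_occupationTime [IsFiniteMeasure μ]
    (hTm : Measurable fun p : ℝ × X => T p.1 p.2) (hV : MeasurableSet V)
    (hinv : ∀ t, 0 ≤ t → μ (T t ⁻¹' V) = μ V) {N : ℝ} (hN : 0 ≤ N) :
    ∫ x, occupationTime T V x N ∂μ = N * μ.real V := by
  set s := {p : X × ℝ | p.2 ∈ visitTimes T V p.1 N}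
  have hs : MeasurableSet s := measurableSet_setOf_snd_mem_visitTimes hTm hV N
  have hsection : ∀ t, μ ((·, t) ⁻¹' s) = (Set.Icc 0 N).indicator (fun _ => μ V) t := by
    intro t
    by_cases ht : t ∈ Set.Icc 0 N
    · rw [Set.indicator_of_mem ht, ← hinv t ht.1]
      congr 1
      ext y
      simp [s, visitTimes, ht.1, ht.2]
    · rw [Set.indicator_of_notMem ht]
      exact measure_mono_null (fun y hy => ht ⟨hy.1, hy.2.1⟩) measure_empty
  -- Tonelli: integrating the time spent in `V` over `μ` is integrating `μ (T t ⁻¹' V)` over time.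
  have hlint : ∫⁻ x, volume (Prod.mk x ⁻¹' s) ∂μ = ENNReal.ofReal N * μ V := by
    rw [← Measure.prod_apply hs, Measure.prod_apply_symm hs]
    simp_rw [hsection]
    rw [lintegral_indicator measurableSet_Icc, setLIntegral_const, Real.volume_Icc, sub_zero,
      mul_comm]
  change ∫ x, (volume (Prod.mk x ⁻¹' s)).toReal ∂μ = _
  rw [integral_toReal (measurable_measure_prodMk_left hs).aemeasurable
      (.of_forall fun x => (volume_visitTimes_le x N).trans_lt ENNReal.ofReal_lt_top),
    hlint, ENNReal.toReal_mul, ENNReal.toReal_ofReal hN, measureReal_def]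

theorem measureReal_le_integral_lowerVisitDensity [IsFiniteMeasure μ] (hT0 : T 0 = id)
    (hT : ∀ s t, 0 ≤ s → 0 ≤ t → T (s + t) = T s ∘ T t)
    (hTm : Measurable fun p : ℝ × X => T p.1 p.2)
    (hinv : ∀ t, 0 ≤ t → ∀ A, MeasurableSet A → μ (T t ⁻¹' A) = μ A) (hV : MeasurableSet V) :
    μ.real V ≤ ∫ x, lowerVisitDensity T V x ∂μ := by
  have hT1 : Measurable (T 1) := hTm.comp (measurable_const.prodMk measurable_id)
  have hS : MeasurePreserving (T 1) μ μ :=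
    ⟨hT1, Measure.ext fun A hA => by rw [Measure.map_apply hT1 hA, hinv 1 zero_le_one A hA]⟩
  have hmean := integral_occupationTime (μ := μ) hTm hV (fun t ht => hinv t ht V hV) zero_le_one
  rw [one_mul] at hmean
  rw [← hmean]
  refine integral_le_integral_of_frequently_birkhoffSum_le hS
    (measurable_occupationTime hTm hV 1) (fun x => occupationTime_nonneg x 1)
    (fun x => by simpa using occupationTime_le (T := T) (V := V) x zero_le_one)
    (measurable_lowerVisitDensity hTm hV)
    (.of_mem_Icc 0 1 (measurable_lowerVisitDensity hTm hV).aemeasurable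
      (.of_forall fun x => ⟨lowerVisitDensity_nonneg x, lowerVisitDensity_le_one x⟩))
    lowerVisitDensity_nonneg (funext fun x => lowerVisitDensity_apply hT hTm hV x zero_le_one)
    fun x ε hε => ?_
  refine ((frequently_lt_of_liminf_lt (u := fun n : ℕ => occupationTime T V x n / n)
    (isCoboundedUnder_ge_of_le atTop fun n => occupationTime_div_le_one x n)
    (lt_add_of_pos_right (lowerVisitDensity T V x) hε)).and_eventually
    (eventually_gt_atTop 0)).mono fun n ⟨hn, hn0⟩ => ?_
  rw [← occupationTime_natCast_eq_birkhoffSum hT0 hT hTm hV, ← div_le_iff₀' (by positivity)]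
  exact hn.le

end OccupationTime

section Ergodic

variable {X : Type*} [MeasurableSpace X] {T : ℝ → X → X} {μ : Measure X}

theorem ae_le_of_le_integral_of_invariant [IsProbabilityMeasure μ]
    (hergodic : ∀ A : Set X, MeasurableSet A →
      (∀ t : ℝ, 0 ≤ t → T t ⁻¹' A = A) → μ A = 0 ∨ μ A = 1)
    {ψ : X → ℝ} (hψ : Measurable ψ) (hψi : Integrable ψ μ)
    (hψT : ∀ t, 0 ≤ t → ∀ x, ψ (T t x) = ψ x) {c : ℝ} (hc : c ≤ ∫ x, ψ x ∂μ) :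
    ∀ᵐ x ∂μ, c ≤ ψ x := by
  set A := {x | c ≤ ψ x}
  have hA : MeasurableSet A := measurableSet_le measurable_const hψ
  rcases hergodic A hA fun t ht => by ext x; simp [A, hψT t ht x] with h0 | h1
  · -- Then `ψ < c` almost everywhere, so the mean forces `ψ = c` almost everywhere.
    have hlt : ψ ≤ᵐ[μ] fun _ => c := by
      filter_upwards [measure_eq_zero_iff_ae_notMem.1 h0] with x hx
      exact (not_le.1 hx).le
    have heq := (integral_eq_iff_of_ae_le hψi (integrable_const c) hlt).1
      (le_antisymm ((integral_mono_ae hψi (integrable_const c) hlt).trans (by simp)) (by simpa))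
    filter_upwards [heq] with x hx
    exact hx.ge
  · exact (ae_iff_measure_eq hA.nullMeasurableSet).2 (by rw [h1, measure_univ])

theorem ae_measureReal_le_liminf_occupationTime_div [IsProbabilityMeasure μ] (hT0 : T 0 = id)
    (hT : ∀ s t, 0 ≤ s → 0 ≤ t → T (s + t) = T s ∘ T t)
    (hTm : Measurable fun p : ℝ × X => T p.1 p.2)
    (hinv : ∀ t, 0 ≤ t → ∀ A, MeasurableSet A → μ (T t ⁻¹' A) = μ A)
    (hergodic : ∀ A : Set X, MeasurableSet A →
      (∀ t : ℝ, 0 ≤ t → T t ⁻¹' A = A) → μ A = 0 ∨ μ A = 1)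
    {V : Set X} (hV : MeasurableSet V) :
    ∀ᵐ x ∂μ, μ.real V ≤ liminf (fun N : ℝ => occupationTime T V x N / N) atTop := by
  have hψ := measurable_lowerVisitDensity hTm hV
  have hψi : Integrable (lowerVisitDensity T V) μ := .of_mem_Icc 0 1 hψ.aemeasurable
    (.of_forall fun x => ⟨lowerVisitDensity_nonneg x, lowerVisitDensity_le_one x⟩)
  filter_upwards [ae_le_of_le_integral_of_invariant hergodic hψ hψi
    (fun t ht x => lowerVisitDensity_apply hT hTm hV x ht)
    (measureReal_le_integral_lowerVisitDensity hT0 hT hTm hinv hV)] with x hx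
  exact hx.trans (lowerVisitDensity_le_liminf_occupationTime_div x)

end Ergodic

theorem exists_countable_isOpen_forall_lt_measure {X : Type*} [TopologicalSpace X]
    [SecondCountableTopology X] [MeasurableSpace X] (μ : Measure X) :
    ∃ D : Set (Set X), D.Countable ∧ (∀ V ∈ D, IsOpen V) ∧
      ∀ U, IsOpen U → ∀ r < μ U, ∃ V ∈ D, V ⊆ U ∧ r < μ V := by
  obtain ⟨B, hBc, -, hB⟩ := TopologicalSpace.exists_countable_basis X
  refine ⟨Set.sUnion '' {s | s.Finite ∧ s ⊆ B}, (Set.countable_ofPred_finite_subset hBc).image _,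
    ?_, fun U hU r hr => ?_⟩
  · rintro _ ⟨s, ⟨-, hsB⟩, rfl⟩
    exact isOpen_sUnion fun b hb => hB.isOpen (hsB hb)
  -- `U` is the directed countable union of the finite unions of basic sets inside it.
  set t := {s : Set (Set X) | s.Finite ∧ s ⊆ {b | b ∈ B ∧ b ⊆ U}}
  have hU : U = ⋃ s ∈ t, ⋃₀ s := by
    refine subset_antisymm (fun x hx => ?_) (Set.iUnion₂_subset fun s hs => ?_)
    · obtain ⟨b, hbB, hxb, hbU⟩ := hB.exists_subset_of_mem_open hx hU
      exact Set.mem_biUnion (x := {b}) ⟨Set.finite_singleton b, by simpa using ⟨hbB, hbU⟩⟩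
        (by simpa using hxb)
    · exact Set.sUnion_subset fun b hb => (hs.2 hb).2
  have hdir : DirectedOn (Function.onFun (· ⊆ ·) Set.sUnion) t := fun s₁ hs₁ s₂ hs₂ =>
    ⟨s₁ ∪ s₂, ⟨hs₁.1.union hs₂.1, Set.union_subset hs₁.2 hs₂.2⟩,
      Set.sUnion_mono Set.subset_union_left, Set.sUnion_mono Set.subset_union_right⟩
  rw [hU, measure_biUnion_eq_iSup (Set.countable_ofPred_finite_subset (hBc.mono fun b hb => hb.1))
    hdir, lt_biSup_iff] at hr
  obtain ⟨s, hs, hrs⟩ := hr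
  exact ⟨⋃₀ s, ⟨s, ⟨hs.1, fun b hb => (hs.2 hb).1⟩, rfl⟩,
    Set.sUnion_subset fun b hb => (hs.2 hb).2, hrs⟩

theorem ergodic_measure_implies_frequent_hypercyclicity_general
    {X : Type*} [NormedAddCommGroup X] [NormedSpace ℝ X]
    [TopologicalSpace.SeparableSpace X] [MeasurableSpace X] [BorelSpace X]
    (T : ℝ → X →L[ℝ] X)
    (hT0 : T 0 = ContinuousLinearMap.id ℝ X)
    (hTadd : ∀ s t : ℝ, 0 ≤ s → 0 ≤ t → T (s + t) = (T s).comp (T t))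
    (hTjoint : Measurable (fun p : ℝ × X => T p.1 p.2))
    (μ : Measure X) [IsProbabilityMeasure μ]
    (hinv : ∀ t : ℝ, 0 ≤ t → ∀ A : Set X, MeasurableSet A → μ (T t ⁻¹' A) = μ A)
    (hergodic : ∀ A : Set X, MeasurableSet A →
      (∀ t : ℝ, 0 ≤ t → T t ⁻¹' A = A) → μ A = 0 ∨ μ A = 1)
    (hfull : ∀ U : Set X, IsOpen U → U.Nonempty → 0 < μ U) :
    (∀ᵐ x ∂μ, ∀ U : Set X, IsOpen U → U.Nonempty →
      (μ U).toReal ≤ liminf (fun N : ℝ =>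
        (volume {t : ℝ | 0 ≤ t ∧ t ≤ N ∧ T t x ∈ U}).toReal / N) atTop) ∧
    (∃ x : X, ∀ U : Set X, IsOpen U → U.Nonempty →
      0 < liminf (fun N : ℝ =>
        (volume {t : ℝ | 0 ≤ t ∧ t ≤ N ∧ T t x ∈ U}).toReal / N) atTop) := by
  have : SecondCountableTopology X := UniformSpace.secondCountable_of_separable X
  have hT0' : ⇑(T 0) = id := by rw [hT0]; rfl
  have hT s t (hs : 0 ≤ s) (ht : 0 ≤ t) : ⇑(T (s + t)) = T s ∘ T t := by rw [hTadd s t hs ht]; rfl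
  obtain ⟨D, hDc, hDo, hD⟩ := exists_countable_isOpen_forall_lt_measure μ
  have hgood : ∀ᵐ x ∂μ, ∀ V ∈ D,
      μ.real V ≤ liminf (fun N : ℝ => occupationTime (T ·) V x N / N) atTop :=
    (ae_ball_iff hDc).2 fun V hV => ae_measureReal_le_liminf_occupationTime_div (T := (T ·))
      hT0' hT hTjoint hinv hergodic (hDo V hV).measurableSet
  have hdense : ∀ᵐ x ∂μ, ∀ U : Set X, IsOpen U → U.Nonempty →
      μ.real U ≤ liminf (fun N : ℝ => occupationTime (T ·) U x N / N) atTop := by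
    filter_upwards [hgood] with x hx U hU _
    refine le_of_forall_lt_imp_le_of_dense fun c hc => ?_
    rcases lt_or_ge c 0 with hc0 | hc0
    · exact hc0.le.trans (liminf_occupationTime_div_nonneg x)
    obtain ⟨V, hVD, hVU, hcV⟩ :=
      hD U hU _ ((ENNReal.ofReal_lt_iff_lt_toReal hc0 (measure_ne_top μ U)).2 hc)
    exact ((ENNReal.ofReal_lt_iff_lt_toReal hc0 (measure_ne_top μ V)).1 hcV).le.trans <|
      (hx V hVD).trans (liminf_occupationTime_div_mono hVU x)
  refine ⟨hdense, ?_⟩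
  obtain ⟨x, hx⟩ := hdense.exists
  exact ⟨x, fun U hU hne =>
    (ENNReal.toReal_pos (hfull U hU hne).ne' (measure_ne_top μ U)).trans_le (hx U hU hne)⟩

theorem ergodic_measure_implies_frequent_hypercyclicity
    {X : Type*} [NormedAddCommGroup X] [NormedSpace ℝ X] [CompleteSpace X]
    [TopologicalSpace.SeparableSpace X] [MeasurableSpace X] [BorelSpace X]
    (T : ℝ → X →L[ℝ] X)
    (hT0 : T 0 = ContinuousLinearMap.id ℝ X)
    (hTadd : ∀ s t : ℝ, 0 ≤ s → 0 ≤ t → T (s + t) = (T s).comp (T t))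
    (hTcont : ∀ x : X, ContinuousOn (fun t : ℝ => T t x) (Set.Ici 0))
    (hTjoint : Measurable (fun p : ℝ × X => T p.1 p.2))
    (μ : Measure X) [IsProbabilityMeasure μ]
    (hinv : ∀ t : ℝ, 0 ≤ t → ∀ A : Set X, MeasurableSet A → μ (T t ⁻¹' A) = μ A)
    (hergodic : ∀ A : Set X, MeasurableSet A →
      (∀ t : ℝ, 0 ≤ t → T t ⁻¹' A = A) → μ A = 0 ∨ μ A = 1)
    (hfull : ∀ U : Set X, IsOpen U → U.Nonempty → 0 < μ U) :
    (∀ᵐ x ∂μ, ∀ U : Set X, IsOpen U → U.Nonempty →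
      (μ U).toReal ≤ liminf (fun N : ℝ =>
        (volume {t : ℝ | 0 ≤ t ∧ t ≤ N ∧ T t x ∈ U}).toReal / N) atTop) ∧
    (∃ x : X, ∀ U : Set X, IsOpen U → U.Nonempty →
      0 < liminf (fun N : ℝ =>
        (volume {t : ℝ | 0 ≤ t ∧ t ≤ N ∧ T t x ∈ U}).toReal / N) atTop) :=
  ergodic_measure_implies_frequent_hypercyclicity_general T hT0 hTadd hTjoint μ hinv hergodic hfull
end
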